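/- arXiv:2007.07571 — 6 statements merged into one kernel-verified Lean document; each statement's English description precedes it below -/
import Mathlib

section
/- In the CTC transition system, for every cell identifier n and every starting time t, if the current configuration is the cell C(n, blood, 3, [epcam, cd47]) at time t, then there exists a delay d ≥ 0 such that the configuration C(n, bone, 8, [epcam, cd47, cd44, met]) at time t + d is reachable by a finite sequence of steps of the transition relation (indeed d = d42(3) + d52(5) + d72 works, via the rules blec2, blecc2, bleccm2). -/
inductive Compartment : Type
  | breast | blood | bone
  deriving DecidableEq

inductive Mutation : Type
  | tgfb | epcam | cd47 | cd44 | met | seeded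
  deriving DecidableEq

/-- `[epcam, ...]` abbreviates `[tgfb, epcam, ...]`. -/
def mT : List Mutation := [.tgfb]
def mE : List Mutation := [.tgfb, .epcam]
def mEC : List Mutation := [.tgfb, .epcam, .cd47]
def mECC : List Mutation := [.tgfb, .epcam, .cd47, .cd44]
def mECM : List Mutation := [.tgfb, .epcam, .cd47, .met]
def mECCM : List Mutation := [.tgfb, .epcam, .cd47, .cd44, .met]
def mECCMS : List Mutation := [.tgfb, .epcam, .cd47, .cd44, .met, .seeded]

/-- A configuration: a cell `C(n, c, f, m)` or an apoptosis marker `Apop(n)`. -/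
inductive Config : Type
  | cell (n : ℕ) (c : Compartment) (f : ℕ) (m : List Mutation)
  | apop (n : ℕ)
  deriving DecidableEq

/-- The (nonnegative, rational) delay parameters of the CTC system. -/
structure Delays where
  d00 : ℚ
  d01 : ℕ → ℚ
  d02 : ℚ
  d10 : ℚ
  d10r : ℚ
  d11 : ℕ → ℚ
  d12 : ℚ
  d20 : ℕ → ℚ
  d20r : ℕ → ℚ
  d21 : ℕ → ℚ
  d22 : ℕ → ℚ
  d30 : ℕ → ℚ
  d30r : ℕ → ℚ
  d31 : ℕ → ℚ
  d32 : ℕ → ℚ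
  d40 : ℕ → ℚ
  d41 : ℕ → ℚ
  d42 : ℕ → ℚ
  d43 : ℕ → ℚ
  d50 : ℕ → ℚ
  d51 : ℕ → ℚ
  d52 : ℕ → ℚ
  d60 : ℕ → ℚ
  d61 : ℕ → ℚ
  d62 : ℕ → ℚ
  d70 : ℕ → ℚ
  d71 : ℕ → ℚ
  d72 : ℚ
  d80 : ℕ → ℚ
  d81 : ℕ → ℚ
  d82 : ℕ → ℚ
  d00_nonneg : 0 ≤ d00
  d01_nonneg : ∀ f, 0 ≤ d01 f
  d02_nonneg : 0 ≤ d02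
  d10_nonneg : 0 ≤ d10
  d10r_nonneg : 0 ≤ d10r
  d11_nonneg : ∀ f, 0 ≤ d11 f
  d12_nonneg : 0 ≤ d12
  d20_nonneg : ∀ f, 0 ≤ d20 f
  d20r_nonneg : ∀ f, 0 ≤ d20r f
  d21_nonneg : ∀ f, 0 ≤ d21 f
  d22_nonneg : ∀ f, 0 ≤ d22 f
  d30_nonneg : ∀ f, 0 ≤ d30 f
  d30r_nonneg : ∀ f, 0 ≤ d30r f
  d31_nonneg : ∀ f, 0 ≤ d31 f
  d32_nonneg : ∀ f, 0 ≤ d32 f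
  d40_nonneg : ∀ f, 0 ≤ d40 f
  d41_nonneg : ∀ f, 0 ≤ d41 f
  d42_nonneg : ∀ f, 0 ≤ d42 f
  d43_nonneg : ∀ f, 0 ≤ d43 f
  d50_nonneg : ∀ f, 0 ≤ d50 f
  d51_nonneg : ∀ f, 0 ≤ d51 f
  d52_nonneg : ∀ f, 0 ≤ d52 f
  d60_nonneg : ∀ f, 0 ≤ d60 f
  d61_nonneg : ∀ f, 0 ≤ d61 f
  d62_nonneg : ∀ f, 0 ≤ d62 f
  d70_nonneg : ∀ f, 0 ≤ d70 f
  d71_nonneg : ∀ f, 0 ≤ d71 f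
  d72_nonneg : 0 ≤ d72
  d80_nonneg : ∀ f, 0 ≤ d80 f
  d81_nonneg : ∀ f, 0 ≤ d81 f
  d82_nonneg : ∀ f, 0 ≤ d82 f

/-- The one-step transition relation of the CTC system (Fig. 2 of the paper). -/
inductive Step (D : Delays) : ℚ × Config → ℚ × Config → Prop
  -- In the breast
  | br0 (n : ℕ) (t : ℚ) :
      Step D (t, .cell n .breast 1 []) (t + D.d00, .cell n .breast 0 [])
  | br1 (n : ℕ) (t : ℚ) (f : ℕ) (h : f ≤ 1) :
      Step D (t, .cell n .breast f []) (t + D.d01 f, .apop n)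
  | br2 (n : ℕ) (t : ℚ) :
      Step D (t, .cell n .breast 1 []) (t + D.d02, .cell n .breast 1 mT)
  | brt0 (n : ℕ) (t : ℚ) :
      Step D (t, .cell n .breast 1 mT) (t + D.d10, .cell n .breast 0 mT)
  | brt0r (n : ℕ) (t : ℚ) :
      Step D (t, .cell n .breast 1 mT) (t + D.d10r, .cell n .breast 2 mT)
  | brt1 (n : ℕ) (t : ℚ) (f : ℕ) (h : f ≤ 2) :
      Step D (t, .cell n .breast f mT) (t + D.d11 f, .apop n)
  | brt2 (n : ℕ) (t : ℚ) (f : ℕ) (h1 : 1 ≤ f) (h2 : f ≤ 2) :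
      Step D (t, .cell n .breast f mT) (t + D.d12, .cell n .breast (f + 1) mE)
  | bre0 (n : ℕ) (t : ℚ) (f : ℕ) (h1 : 1 ≤ f) (h2 : f ≤ 3) :
      Step D (t, .cell n .breast f mE) (t + D.d20 f, .cell n .breast (f - 1) mE)
  | bre0r (n : ℕ) (t : ℚ) (f : ℕ) (h1 : 1 ≤ f) (h2 : f ≤ 2) :
      Step D (t, .cell n .breast f mE) (t + D.d20r f, .cell n .breast (f + 1) mE)
  | bre1 (n : ℕ) (t : ℚ) (f : ℕ) (h : f ≤ 3) :
      Step D (t, .cell n .breast f mE) (t + D.d21 f, .apop n)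
  | bre2 (n : ℕ) (t : ℚ) (f : ℕ) (h1 : 1 ≤ f) (h2 : f ≤ 3) :
      Step D (t, .cell n .breast f mE) (t + D.d22 f, .cell n .blood (f + 1) mE)
  -- In the blood
  | ble0 (n : ℕ) (t : ℚ) (f : ℕ) (h1 : 1 ≤ f) (h2 : f ≤ 4) :
      Step D (t, .cell n .blood f mE) (t + D.d30 f, .cell n .blood (f - 1) mE)
  | ble0r (n : ℕ) (t : ℚ) (f : ℕ) (h1 : 1 ≤ f) (h2 : f ≤ 3) :
      Step D (t, .cell n .blood f mE) (t + D.d30r f, .cell n .blood (f + 1) mE)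
  | ble1 (n : ℕ) (t : ℚ) (f : ℕ) (h : f ≤ 4) :
      Step D (t, .cell n .blood f mE) (t + D.d31 f, .apop n)
  | ble2 (n : ℕ) (t : ℚ) (f : ℕ) (h1 : 1 ≤ f) (h2 : f ≤ 4) :
      Step D (t, .cell n .blood f mE) (t + D.d32 f, .cell n .blood (f + 2) mEC)
  | blec0 (n : ℕ) (t : ℚ) (f : ℕ) (h1 : 1 ≤ f) (h2 : f ≤ 6) :
      Step D (t, .cell n .blood f mEC) (t + D.d40 f, .cell n .blood (f - 1) mEC)
  | blec1 (n : ℕ) (t : ℚ) (f : ℕ) (h : f ≤ 6) :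
      Step D (t, .cell n .blood f mEC) (t + D.d41 f, .apop n)
  | blec2 (n : ℕ) (t : ℚ) (f : ℕ) (h1 : 1 ≤ f) (h2 : f ≤ 6) :
      Step D (t, .cell n .blood f mEC) (t + D.d42 f, .cell n .blood (f + 2) mECC)
  | blec3 (n : ℕ) (t : ℚ) (f : ℕ) (h1 : 1 ≤ f) (h2 : f ≤ 6) :
      Step D (t, .cell n .blood f mEC) (t + D.d43 f, .cell n .blood (f + 2) mECM)
  | blecc0 (n : ℕ) (t : ℚ) (f : ℕ) (h1 : 1 ≤ f) (h2 : f ≤ 6) :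
      Step D (t, .cell n .blood f mECC) (t + D.d50 f, .cell n .blood (f - 1) mECC)
  | blecc1 (n : ℕ) (t : ℚ) (f : ℕ) (h : f ≤ 8) :
      Step D (t, .cell n .blood f mECC) (t + D.d51 f, .apop n)
  | blecc2 (n : ℕ) (t : ℚ) (f : ℕ) (h1 : 1 ≤ f) (h2 : f ≤ 8) :
      Step D (t, .cell n .blood f mECC) (t + D.d52 f, .cell n .blood (f + 2) mECCM)
  | blecm0 (n : ℕ) (t : ℚ) (f : ℕ) (h1 : 1 ≤ f) (h2 : f ≤ 8) :
      Step D (t, .cell n .blood f mECM) (t + D.d60 f, .cell n .blood (f - 1) mECM)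
  | blecm1 (n : ℕ) (t : ℚ) (f : ℕ) (h : f ≤ 8) :
      Step D (t, .cell n .blood f mECM) (t + D.d61 f, .apop n)
  | blecm2 (n : ℕ) (t : ℚ) (f : ℕ) (h1 : 1 ≤ f) (h2 : f ≤ 8) :
      Step D (t, .cell n .blood f mECM) (t + D.d62 f, .cell n .blood (f + 2) mECCM)
  | bleccm0 (n : ℕ) (t : ℚ) (f : ℕ) (h1 : 1 ≤ f) (h2 : f ≤ 10) :
      Step D (t, .cell n .blood f mECCM) (t + D.d70 f, .cell n .blood (f - 1) mECCM)
  | bleccm1 (n : ℕ) (t : ℚ) (f : ℕ) (h : f ≤ 10) :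
      Step D (t, .cell n .blood f mECCM) (t + D.d71 f, .apop n)
  | bleccm2 (n : ℕ) (t : ℚ) (f : ℕ) (h1 : 1 ≤ f) (h2 : f ≤ 10) :
      Step D (t, .cell n .blood f mECCM) (t + D.d72, .cell n .bone (f + 1) mECCM)
  -- In the bone
  | bo0 (n : ℕ) (t : ℚ) (f : ℕ) (h1 : 1 ≤ f) (h2 : f ≤ 11) :
      Step D (t, .cell n .bone f mECCM) (t + D.d80 f, .cell n .bone (f - 1) mECCM)
  | bo1 (n : ℕ) (t : ℚ) (f : ℕ) (h : f ≤ 11) :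
      Step D (t, .cell n .bone f mECCM) (t + D.d81 f, .apop n)
  | bo2 (n : ℕ) (t : ℚ) (f : ℕ) (h1 : 1 ≤ f) (h2 : f ≤ 11) :
      Step D (t, .cell n .bone f mECCM) (t + D.d82 f, .cell n .bone (f + 1) mECCMS)

/-- Reachability: the reflexive–transitive closure of the one-step relation. -/
def Reachable (D : Delays) : ℚ × Config → ℚ × Config → Prop :=
  Relation.ReflTransGen (Step D)

/-- From `C(n, blood, 3, [epcam, cd47])` at time `t`, the configuration
`C(n, bone, 8, [epcam, cd47, cd44, met])` at time `t + d` is reachable for some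
delay `d ≥ 0`. -/
theorem ctc_reachability (D : Delays) (n : ℕ) (t : ℚ) :
    ∃ d : ℚ, 0 ≤ d ∧
      Reachable D (t, Config.cell n .blood 3 mEC)
        (t + d, Config.cell n .bone 8 mECCM) := by

  refine ⟨D.d42 3 + D.d52 5 + D.d72, by
    have := D.d42_nonneg 3; have := D.d52_nonneg 5; have := D.d72_nonneg; linarith, ?_⟩
  have h1 := Step.blec2 (D := D) n t 3 (by norm_num) (by norm_num)
  have h2 := Step.blecc2 (D := D) n (t + D.d42 3) 5 (by norm_num) (by norm_num)
  have h3 := Step.bleccm2 (D := D) n (t + D.d42 3 + D.d52 5) 7 (by norm_num) (by norm_num)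
  norm_num at h1 h2 h3
  have : t + (D.d42 3 + D.d52 5 + D.d72) = t + D.d42 3 + D.d52 5 + D.d72 := by ring
  rw [this]
  exact Relation.ReflTransGen.head h1 (Relation.ReflTransGen.head h2 (Relation.ReflTransGen.single h3))
end

section
/- ('Must' property.) In the CTC transition system, suppose the configuration C(n, blood, f, m) at time t makes a single step to a configuration St at time t + t_d, where the mutation list m contains cd47. Then exactly one of the following four cases holds: (1) St = C(n, blood, f − 1, m) (a passenger mutation: fitness decreases by one, driver mutations unchanged); (2) St = Apop(n) (apoptosis); (3) St = C(n, blood, f + 2, m′) where m′ is m extended by exactly one additional driver mutation (a driver mutation: fitness increases by two); or (4) St = C(n, bone, f + 1, m) and m = [epcam, cd47, cd44, met] (the cell moves to the bone: fitness increases by one, mutations unchanged). -/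
private lemma ctc_must_aux (D : Delays) (n f : ℕ) (m : List Mutation)
    (t : ℚ) (p : ℚ × Config) (hm : Mutation.cd47 ∈ m)
    (hstep : Step D (t, Config.cell n .blood f m) p) :
    p.2 = Config.cell n .blood (f - 1) m ∨
    p.2 = Config.apop n ∨
    (∃ (m' : List Mutation) (μ : Mutation),
        μ ∉ m ∧ m'.Perm (μ :: m) ∧ p.2 = Config.cell n .blood (f + 2) m') ∨
    (p.2 = Config.cell n .bone (f + 1) m ∧ m = mECCM) := by
  cases hstep with
  | ble0 _ _ _ _ _ => exact absurd hm (by decide)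
  | ble0r _ _ _ _ _ => exact absurd hm (by decide)
  | ble1 _ _ _ _ => exact absurd hm (by decide)
  | ble2 _ _ _ _ _ => exact absurd hm (by decide)
  | blec0 _ _ _ _ _ => exact Or.inl rfl
  | blec1 _ _ _ _ => exact Or.inr (Or.inl rfl)
  | blec2 _ _ _ _ _ =>
      exact Or.inr (Or.inr (Or.inl ⟨mECC, .cd44, by decide, by decide, rfl⟩))
  | blec3 _ _ _ _ _ =>
      exact Or.inr (Or.inr (Or.inl ⟨mECM, .met, by decide, by decide, rfl⟩))
  | blecc0 _ _ _ _ _ => exact Or.inl rfl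
  | blecc1 _ _ _ _ => exact Or.inr (Or.inl rfl)
  | blecc2 _ _ _ _ _ =>
      exact Or.inr (Or.inr (Or.inl ⟨mECCM, .met, by decide, by decide, rfl⟩))
  | blecm0 _ _ _ _ _ => exact Or.inl rfl
  | blecm1 _ _ _ _ => exact Or.inr (Or.inl rfl)
  | blecm2 _ _ _ _ _ =>
      exact Or.inr (Or.inr (Or.inl ⟨mECCM, .cd44, by decide, by decide, rfl⟩))
  | bleccm0 _ _ _ _ _ => exact Or.inl rfl
  | bleccm1 _ _ _ _ => exact Or.inr (Or.inl rfl)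
  | bleccm2 _ _ _ _ _ => exact Or.inr (Or.inr (Or.inr ⟨rfl, rfl⟩))

/-- "Must" property: a blood cell whose mutation list contains `cd47` has exactly
four possible one-step evolutions, and in any given step exactly one of them occurs. -/
theorem ctc_must (D : Delays) (n f : ℕ) (m : List Mutation) (t td : ℚ) (St : Config)
    (hm : Mutation.cd47 ∈ m)
    (hstep : Step D (t, Config.cell n .blood f m) (t + td, St)) :
    let P1 : Prop := St = Config.cell n .blood (f - 1) m
    let P2 : Prop := St = Config.apop n
    let P3 : Prop := ∃ (m' : List Mutation) (μ : Mutation),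
        μ ∉ m ∧ m'.Perm (μ :: m) ∧ St = Config.cell n .blood (f + 2) m'
    let P4 : Prop := St = Config.cell n .bone (f + 1) m ∧ m = mECCM
    (P1 ∨ P2 ∨ P3 ∨ P4) ∧
      ¬(P1 ∧ P2) ∧ ¬(P1 ∧ P3) ∧ ¬(P1 ∧ P4) ∧
      ¬(P2 ∧ P3) ∧ ¬(P2 ∧ P4) ∧ ¬(P3 ∧ P4) := by
  intro P1 P2 P3 P4
  have hdisj : P1 ∨ P2 ∨ P3 ∨ P4 :=
    ctc_must_aux D n f m t (t + td, St) hm hstep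
  refine ⟨hdisj, ?_, ?_, ?_, ?_, ?_, ?_⟩
  · rintro ⟨h1, h2⟩
    have e1 : St = Config.cell n .blood (f - 1) m := h1
    have e2 : St = Config.apop n := h2
    rw [e1] at e2; exact Config.noConfusion e2
  · rintro ⟨h1, m', μ, hμ, hperm, h3⟩
    have e1 : St = Config.cell n .blood (f - 1) m := h1
    rw [e1] at h3
    obtain ⟨-, -, hf, hmm⟩ := Config.cell.inj h3
    omega
  · rintro ⟨h1, h4, -⟩
    have e1 : St = Config.cell n .blood (f - 1) m := h1
    have e4 : St = Config.cell n .bone (f + 1) m := h4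
    rw [e1] at e4
    exact absurd (Config.cell.inj e4).2.1 (by decide)
  · rintro ⟨h2, m', μ, hμ, hperm, h3⟩
    have e2 : St = Config.apop n := h2
    rw [e2] at h3; exact Config.noConfusion h3
  · rintro ⟨h2, h4, -⟩
    have e2 : St = Config.apop n := h2
    have e4 : St = Config.cell n .bone (f + 1) m := h4
    rw [e2] at e4; exact Config.noConfusion e4
  · rintro ⟨⟨m', μ, hμ, hperm, h3⟩, h4, -⟩
    have e4 : St = Config.cell n .bone (f + 1) m := h4
    rw [h3] at e4
    exact absurd (Config.cell.inj e4).2.1 (by decide)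
end

section
/- (Delayer effect for a single-input neuron.) Let N be a LI&F neuron whose weight list has length 1, say Weights(N) = [w], with τ(N) ≤ w. Then for every binary input list input : list ℕ, the chronological output of the neuron N′ obtained by resetting N and then processing input equals [0] ++ input; that is, the neuron transfers its input sequence to its output unchanged, with a delay of one time step. -/
/-- A LI&F (leaky integrate-and-fire) neuron. -/
structure Neuron where
  Output : List ℕ
  Weights : List ℚ
  Leak_Factor : ℚ
  Tau : ℚ
  Current : ℚ
  Output_Bin : ∀ x ∈ Output, x = 0 ∨ x = 1
  LeakRange : 0 ≤ Leak_Factor ∧ Leak_Factor ≤ 1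
  PosTau : 0 < Tau
  WRange : ∀ w ∈ Weights, -1 ≤ w ∧ w ≤ 1

/-- Weighted sum of the inputs of a neuron. -/
def potential : List ℚ → List ℕ → ℚ
  | [], _ => 0
  | _ :: _, [] => 0
  | w :: ws, x :: xs => if x = 0 then potential ws xs else potential ws xs + w

/-- The next membrane potential of a neuron. -/
def NextPotential (N : Neuron) (xs : List ℕ) : ℚ :=
  if N.Tau ≤ N.Current then potential N.Weights xs
  else potential N.Weights xs + N.Leak_Factor * N.Current

/-- The next output of a neuron. -/
def NextOutput (N : Neuron) (xs : List ℕ) : ℕ :=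
  if N.Tau ≤ NextPotential N xs then 1 else 0

/-- One state change of a neuron on processing the inputs `xs`. -/
def NextNeuron (N : Neuron) (xs : List ℕ) : Neuron where
  Output := NextOutput N xs :: N.Output
  Weights := N.Weights
  Leak_Factor := N.Leak_Factor
  Tau := N.Tau
  Current := NextPotential N xs
  Output_Bin := by
    intro x hx
    rcases List.mem_cons.mp hx with h | h
    · subst h
      unfold NextOutput
      split
      · right; rfl
      · left; rfl
    · exact N.Output_Bin x h
  LeakRange := N.LeakRange
  PosTau := N.PosTau
  WRange := N.WRange

/-- Reinitialize a neuron to its initial state. -/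
def ResetNeuron (N : Neuron) : Neuron where
  Output := [0]
  Weights := N.Weights
  Leak_Factor := N.Leak_Factor
  Tau := N.Tau
  Current := 0
  Output_Bin := by
    intro x hx
    exact Or.inl (List.mem_singleton.mp hx)
  LeakRange := N.LeakRange
  PosTau := N.PosTau
  WRange := N.WRange

/-- Resetting `N` and then processing the input list, feeding the inputs one at a
time (as singleton input lists). -/
def processInput (N : Neuron) (input : List ℕ) : Neuron :=
  input.foldl (fun M x => NextNeuron M [x]) (ResetNeuron N)

/-- The leak term `Leak_Factor * Current` does not enter the next potential: the neuron is
either at rest or has just fired. -/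
def Neuron.NoCarry (M : Neuron) : Prop :=
  M.Current = 0 ∨ M.Tau ≤ M.Current

lemma potential_singleton (w : ℚ) (x : ℕ) :
    potential [w] [x] = if x = 0 then 0 else w := by
  split_ifs with hx <;> simp [potential, hx]

lemma nextPotential_of_noCarry {M : Neuron} (hM : M.NoCarry) (xs : List ℕ) :
    NextPotential M xs = potential M.Weights xs := by
  unfold NextPotential
  rcases hM with h | h <;> simp [h]

section SingleInput

variable {M : Neuron} {w : ℚ} {x : ℕ}

lemma nextPotential_singleton (hW : M.Weights = [w]) (hM : M.NoCarry) :
    NextPotential M [x] = if x = 0 then 0 else w := by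
  rw [nextPotential_of_noCarry hM, hW, potential_singleton]

lemma nextOutput_eq_input (hW : M.Weights = [w]) (hwτ : M.Tau ≤ w) (hM : M.NoCarry)
    (hx : x = 0 ∨ x = 1) : NextOutput M [x] = x := by
  unfold NextOutput
  rw [nextPotential_singleton hW hM]
  rcases hx with rfl | rfl
  · simp [M.PosTau]
  · simp [hwτ]

lemma noCarry_nextNeuron (hW : M.Weights = [w]) (hwτ : M.Tau ≤ w) (hM : M.NoCarry) :
    (NextNeuron M [x]).NoCarry := by
  change NextPotential M [x] = 0 ∨ M.Tau ≤ NextPotential M [x]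
  rw [nextPotential_singleton hW hM]
  split_ifs
  · exact Or.inl rfl
  · exact Or.inr hwτ

lemma foldl_nextNeuron_output (hW : M.Weights = [w]) (hwτ : M.Tau ≤ w) (hM : M.NoCarry)
    {input : List ℕ} (hbin : ∀ x ∈ input, x = 0 ∨ x = 1) :
    (input.foldl (fun M x => NextNeuron M [x]) M).Output = input.reverse ++ M.Output := by
  induction input generalizing M with
  | nil => rfl
  | cons x xs ih =>
    have hx := hbin x List.mem_cons_self
    rw [List.foldl_cons, ih (M := NextNeuron M [x]) hW hwτ (noCarry_nextNeuron hW hwτ hM)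
      (fun y hy => hbin y (List.mem_cons_of_mem x hy))]
    simp [NextNeuron, nextOutput_eq_input hW hwτ hM hx]

end SingleInput

/-- Delayer effect for a single-input neuron: if the single weight is at least
the threshold, the chronological output equals `0 :: input`. -/
theorem delayer_effect (N : Neuron) (w : ℚ) (input : List ℕ)
    (hw : N.Weights = [w]) (hwτ : N.Tau ≤ w)
    (hbin : ∀ x ∈ input, x = 0 ∨ x = 1) :
    (processInput N input).Output.reverse = [0] ++ input := by
  have hReset : (ResetNeuron N).NoCarry := Or.inl rfl
  rw [processInput, foldl_nextNeuron_output (M := ResetNeuron N) hw hwτ hReset hbin]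
  simp [ResetNeuron]
end

section
/- (Filter effect for a single-input neuron.) Let N be a LI&F neuron whose weight list has length 1, say Weights(N) = [w], with w < τ(N). Then for every binary input list input : list ℕ, the output list Output(N′) of the neuron N′ obtained by resetting N and then processing input contains no two consecutive 1s (the substring 11 does not occur in Output(N′)). -/
lemma potential_single_lt (w τ : ℚ) (hτ : 0 < τ) (hwτ : w < τ) (x : ℕ) :
    potential [w] [x] < τ := by
  unfold potential
  split <;> simp [potential, hτ, hwτ]

lemma filter_aux (τ w : ℚ) (hτ : 0 < τ) (hwτ : w < τ) :
    ∀ (input : List ℕ) (M : Neuron), M.Weights = [w] → M.Tau = τ →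
    (M.Output.head? = some 1 → τ ≤ M.Current) →
    ¬ [1, 1] <:+: M.Output →
    ¬ [1, 1] <:+: (input.foldl (fun M x => NextNeuron M [x]) M).Output := by
  intro input
  induction input with
  | nil => intro M _ _ _ h; simpa using h
  | cons x xs ih =>
    intro M hW hT hhead hinf
    simp only [List.foldl_cons]
    have key : M.Output.head? = some 1 → NextOutput M [x] = 0 := by
      intro h1
      have hc : τ ≤ M.Current := hhead h1
      have hp : NextPotential M [x] = potential [w] [x] := by
        unfold NextPotential
        rw [hW, hT, if_pos hc]
      unfold NextOutput
      rw [hT, hp, if_neg (not_le.mpr (potential_single_lt w τ hτ hwτ x))]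
    apply ih
    · exact hW
    · exact hT
    · intro h1
      simp only [NextNeuron, List.head?_cons, Option.some.injEq] at h1
      show τ ≤ NextPotential M [x]
      unfold NextOutput at h1
      rw [hT] at h1
      by_contra hle
      rw [if_neg hle] at h1
      exact absurd h1 (by norm_num)
    · show ¬ [1, 1] <:+: NextOutput M [x] :: M.Output
      rw [List.infix_cons_iff]
      rintro (hpre | hinf')
      · rw [List.cons_prefix_cons] at hpre
        obtain ⟨ho, hpre1⟩ := hpre
        obtain ⟨t, ht⟩ := hpre1
        have : M.Output.head? = some 1 := by rw [← ht]; rfl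
        rw [key this] at ho
        exact absurd ho (by norm_num)
      · exact hinf hinf'

/-- Filter effect for a single-input neuron: if the single weight is below the
threshold, the output contains no two consecutive 1s. -/
theorem filter_effect (N : Neuron) (w : ℚ) (input : List ℕ)
    (hw : N.Weights = [w]) (hwτ : w < N.Tau)
    (hbin : ∀ x ∈ input, x = 0 ∨ x = 1) :
    ¬ [1, 1] <:+: (processInput N input).Output := by
  apply filter_aux N.Tau w N.PosTau hwτ input (ResetNeuron N) hw rfl
  · intro h; simp [ResetNeuron] at h
  · intro h
    have := h.sublist.subset (show (1:ℕ) ∈ [1,1] by simp)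
    simp [ResetNeuron] at this
end

section
/- (Inhibitor effect.) Let N be a LI&F neuron whose weight list has length 1, say Weights(N) = [w], with w < 0. Then for every binary input list input : list ℕ, the output list Output(N′) of the neuron N′ obtained by resetting N and then processing input contains no occurrence of 1; that is, the neuron is inactive and no signal ever passes through it. -/
lemma inhibitor_aux (w : ℚ) (hwneg : w < 0) (input : List ℕ) :
    ∀ M : Neuron, M.Weights = [w] → M.Current ≤ 0 → 1 ∉ M.Output →
    1 ∉ (input.foldl (fun M x => NextNeuron M [x]) M).Output := by
  induction input with
  | nil => intro M _ _ h; exact h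
  | cons x xs ih =>
    intro M hw hc hout
    simp only [List.foldl_cons]
    have hpot : potential M.Weights [x] ≤ 0 := by
      rw [hw]; simp only [potential]
      split <;> linarith
    have hnext : NextPotential M [x] ≤ 0 := by
      unfold NextPotential
      split
      · linarith [M.PosTau]
      · have h1 := M.LeakRange.1
        nlinarith
    have hout1 : NextOutput M [x] = 0 := by
      unfold NextOutput
      rw [if_neg (by linarith [M.PosTau])]
    apply ih
    · exact hw
    · exact hnext
    · simp [NextNeuron, hout1]
      exact fun h => hout (by simpa using h)

/-- Inhibitor effect: if the single weight is negative, the neuron never emits 1. -/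
theorem inhibitor_effect (N : Neuron) (w : ℚ) (input : List ℕ)
    (hw : N.Weights = [w]) (hwneg : w < 0)
    (hbin : ∀ x ∈ input, x = 0 ∨ x = 1) :
    1 ∉ (processInput N input).Output := by
  apply inhibitor_aux w hwneg input
  · exact hw
  · exact le_refl 0
  · simp [ResetNeuron]
end

section
/- (Delayer effect in a simple series.) Let Series = [N₁, …, Nₙ] be a list of n LI&F neurons such that every Nᵢ has a weight list of length 1, say Weights(Nᵢ) = [wᵢ], with τ(Nᵢ) < wᵢ. Then for every binary input list input : list ℕ, the chronological output of the simple series on input equals zeros(n) ++ input, where zeros(n) is the list of n copies of 0; that is, the series transfers the input sequence exactly, with a delay of n time steps. -/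
/-- A simple series of single-input neurons: the first neuron processes the
input; each subsequent neuron processes the chronological output of the
previous one; the chronological output of the series is that of the last
neuron (for the empty series it is the input itself). -/
def seriesProcess : List Neuron → List ℕ → List ℕ
  | [], input => input
  | N :: rest, input => seriesProcess rest (processInput N input).Output.reverse

lemma foldl_out (w : ℚ) :
    ∀ (input : List ℕ) (M : Neuron), M.Weights = [w] → M.Tau < w →
    (M.Current = 0 ∨ M.Tau ≤ M.Current) → (∀ x ∈ input, x = 0 ∨ x = 1) →
    (input.foldl (fun M x => NextNeuron M [x]) M).Output = input.reverse ++ M.Output := by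
  intro input
  induction input with
  | nil => intro M _ _ _ _; simp
  | cons x xs ih =>
    intro M hW hτ hC hbin
    have hp : potential M.Weights [x] = if x = 0 then 0 else w := by
      rw [hW]; simp [potential]
    have hNP : NextPotential M [x] = if x = 0 then 0 else w := by
      unfold NextPotential
      rcases hC with h | h
      · rw [if_neg (by rw [h]; exact not_le.mpr M.PosTau), hp, h]; ring
      · rw [if_pos h, hp]
    have hNO : NextOutput M [x] = x := by
      unfold NextOutput
      rcases hbin x (by simp) with h | h <;> subst h
      · rw [hNP]; simp [not_le.mpr M.PosTau]
      · rw [hNP]; simp [le_of_lt hτ]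
    have := ih (NextNeuron M [x]) hW hτ (by
        show NextPotential M [x] = 0 ∨ M.Tau ≤ NextPotential M [x]
        rw [hNP]
        rcases hbin x (by simp) with h | h <;> subst h
        · simp
        · simp [le_of_lt hτ])
      (fun y hy => hbin y (List.mem_cons_of_mem _ hy))
    rw [List.foldl_cons, this]
    show xs.reverse ++ (NextOutput M [x] :: M.Output) = (x :: xs).reverse ++ M.Output
    rw [hNO]; simp

/-- Delayer effect in a simple series: if every neuron of the series is a
single-input neuron whose weight exceeds its threshold, then the chronological
output of the series on `input` is `n` zeros followed by `input`. -/
theorem delayer_series (Series : List Neuron) (input : List ℕ)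
    (hw : ∀ N ∈ Series, ∃ w : ℚ, N.Weights = [w] ∧ N.Tau < w)
    (hbin : ∀ x ∈ input, x = 0 ∨ x = 1) :
    seriesProcess Series input = List.replicate Series.length 0 ++ input := by
  induction Series generalizing input with
  | nil => simp [seriesProcess]
  | cons N rest ih =>
    obtain ⟨w, hW, hτ⟩ := hw N (by simp)
    have hout : (processInput N input).Output.reverse = 0 :: input := by
      unfold processInput
      rw [foldl_out w input (ResetNeuron N) hW hτ (Or.inl rfl) hbin]
      simp [ResetNeuron]
    rw [seriesProcess, hout,
      ih (0 :: input) (fun M hM => hw M (List.mem_cons_of_mem _ hM))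
        (by intro x hx; rcases List.mem_cons.mp hx with h | h
            · exact Or.inl h
            · exact hbin x h)]
    simp [List.replicate_succ']
end
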